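/- Let w_1 ∈ K be deterministic. For 1 ≤ t ≤ T, let p_t be an 𝓕_{t−1}-measurable random variable with values in (0,1], let g_t be an 𝓕_{t−1}-measurable H-valued random vector with ∑_{t=1}^T ‖g_t‖²/p_t integrable, let X_t be a {0,1}-valued 𝓕_t-measurable random variable with ℙ(X_t = 1 | 𝓕_{t−1}) = p_t, and set g̃_t = (X_t/p_t) · g_t. Define the iterates w_{t+1} = Π_K(w_t − η_t g̃_t) with η_t = D/(√2 · √(∑_{τ=1}^t ‖g̃_τ‖²)) whenever the denominator is positive, and w_{t+1} = w_t otherwise. Then for every fixed w* ∈ K, 𝔼[∑_{t=1}^T ⟨g_t, w_t − w*⟩] ≤ √2 · D · 𝔼[√(∑_{t=1}^T ‖g̃_t‖²)] ≤ √2 · D · √(𝔼[∑_{t=1}^T ‖g_t‖²/p_t]). -/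

import Mathlib

/-!
Pathwise, projected descent with step `η_t = D / (√2 · √S_t)`, `S_t = ∑_{τ ≤ t} ‖G_τ‖²`, has
regret at most `√2 · D · √S_T` against every `u ∈ K`: the projection is nonexpansive towards `K`,
which gives `⟪G_t, v_t - u⟫ ≤ (‖v_t - u‖² - ‖v_{t+1} - u‖²) / (2η_t) + η_t ‖G_t‖² / 2`; summing by
parts with `1/η_t` nondecreasing and `‖v_t - u‖ ≤ D` bounds the first terms by `D² / (2η_T)`, and
`∑ a_t / √(a_1 + ⋯ + a_t) ≤ 2 √(a_1 + ⋯ + a_T)` bounds the second.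

Apply this to `G_t = g̃_t = (X_t / p_t) g_t`. Since `w_t`, `g_t` and `p_t` are
`𝓕_{t-1}`-measurable and `𝔼[X_t | 𝓕_{t-1}] = p_t`, taking out what is known gives
`𝔼⟪g̃_t, w_t - w*⟫ = 𝔼⟪g_t, w_t - w*⟫` and, as `X_t² = X_t`, `𝔼‖g̃_t‖² = 𝔼[‖g_t‖² / p_t]`.
Jensen's inequality for `√` then gives the second bound.
-/

open MeasureTheory Finset
open scoped RealInnerProductSpace ENNReal

theorem div_sqrt_add_le_two_mul_sub_sqrt {S a : ℝ} (hS : 0 ≤ S) (ha : 0 ≤ a) :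
    a / √(S + a) ≤ 2 * (√(S + a) - √S) := by
  rcases (add_nonneg hS ha).eq_or_lt with h | h
  · have ha0 : a = 0 := by linarith
    simp [ha0]
  · have hσ : 0 < √(S + a) := Real.sqrt_pos.2 h
    have hmono : √S ≤ √(S + a) := Real.sqrt_le_sqrt (by linarith)
    have hdiff : a = √(S + a) ^ 2 - √S ^ 2 := by
      rw [Real.sq_sqrt h.le, Real.sq_sqrt hS]; ring
    rw [div_le_iff₀ hσ]
    nlinarith [Real.sqrt_nonneg S]

theorem sum_div_sqrt_partialSum_le (a : ℕ → ℝ) (ha : ∀ t, 0 ≤ a t) (n : ℕ) :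
    ∑ t ∈ Icc 1 n, a t / √(∑ τ ∈ Icc 1 t, a τ) ≤ 2 * √(∑ t ∈ Icc 1 n, a t) := by
  induction n with
  | zero => simp
  | succ n ih =>
    rw [sum_Icc_succ_top (by omega), sum_Icc_succ_top (by omega)]
    have := div_sqrt_add_le_two_mul_sub_sqrt (sum_nonneg fun t (_ : t ∈ Icc 1 n) => ha t)
      (ha (n + 1))
    linarith

theorem sum_Icc_mul_sub_succ_le {c a : ℕ → ℝ} {B : ℝ} (hc : Monotone c) (hc0 : 0 ≤ c 0)
    (ha : ∀ t, 1 ≤ t → 0 ≤ a t ∧ a t ≤ B) (n : ℕ) :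
    ∑ t ∈ Icc 1 n, c t * (a t - a (t + 1)) ≤ c n * B := by
  suffices h : ∀ n, ∑ t ∈ Icc 1 n, c t * (a t - a (t + 1)) ≤ c n * (B - a (n + 1)) by
    have := mul_le_mul_of_nonneg_left (sub_le_self B (ha (n + 1) (by omega)).1)
      (hc0.trans (hc n.zero_le))
    linarith [h n]
  intro n
  induction n with
  | zero => simpa using mul_nonneg hc0 (sub_nonneg.2 (ha 1 le_rfl).2)
  | succ n ih =>
    rw [sum_Icc_succ_top (by omega)]
    have := mul_le_mul_of_nonneg_right (hc n.le_succ) (sub_nonneg.2 (ha (n + 1) (by omega)).2)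
    linarith

structure IsMetricProjection {H : Type*} [NormedAddCommGroup H] (K : Set H) (proj : H → H) :
    Prop where
  mem : ∀ v, proj v ∈ K
  norm_sub_le : ∀ v, ∀ u ∈ K, ‖v - proj v‖ ≤ ‖v - u‖

namespace IsMetricProjection

variable {H : Type*} [NormedAddCommGroup H] {K : Set H} {proj : H → H}

theorem apply_of_mem (hP : IsMetricProjection K proj) {u : H} (hu : u ∈ K) : proj u = u := by
  have := hP.norm_sub_le u u hu
  rw [sub_self, norm_zero, norm_le_zero_iff, sub_eq_zero] at this
  exact this.symm

variable [InnerProductSpace ℝ H]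

theorem inner_sub_le_zero (hP : IsMetricProjection K proj) (hK : Convex ℝ K) (v : H) {u : H}
    (hu : u ∈ K) : ⟪v - proj v, u - proj v⟫ ≤ 0 := by
  have : Nonempty K := ⟨⟨proj v, hP.mem v⟩⟩
  have hbdd : BddBelow (Set.range fun w : K => ‖v - w‖) :=
    ⟨0, by rintro _ ⟨w, rfl⟩; exact norm_nonneg _⟩
  refine (norm_eq_iInf_iff_real_inner_le_zero hK (hP.mem v)).1 ?_ u hu
  exact le_antisymm (le_ciInf fun w => hP.norm_sub_le v w w.2)
    (ciInf_le hbdd ⟨proj v, hP.mem v⟩)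

theorem norm_apply_sub_sq_le (hP : IsMetricProjection K proj) (hK : Convex ℝ K) (v : H)
    {u : H} (hu : u ∈ K) : ‖proj v - u‖ ^ 2 ≤ ‖v - u‖ ^ 2 := by
  have h := hP.inner_sub_le_zero hK v hu
  have e : v - u = (v - proj v) - (u - proj v) := by abel
  rw [e, norm_sub_sq_real (v - proj v), norm_sub_rev (proj v) u]
  nlinarith [sq_nonneg ‖v - proj v‖]

theorem lipschitzWith_one (hP : IsMetricProjection K proj) (hK : Convex ℝ K) :
    LipschitzWith 1 proj := by
  refine LipschitzWith.of_dist_le_mul fun a b => ?_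
  rw [NNReal.coe_one, one_mul, dist_eq_norm, dist_eq_norm]
  have ha := hP.inner_sub_le_zero hK a (hP.mem b)
  have hb := hP.inner_sub_le_zero hK b (hP.mem a)
  have key : ‖proj a - proj b‖ ^ 2 ≤ ⟪a - b, proj a - proj b⟫ := by
    rw [← real_inner_self_eq_norm_sq]
    have e : ⟪a - b, proj a - proj b⟫ - ⟪proj a - proj b, proj a - proj b⟫
        = -⟪a - proj a, proj b - proj a⟫ - ⟪b - proj b, proj a - proj b⟫ := by
      simp only [inner_sub_left, inner_sub_right, real_inner_comm]; ring
    linarith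
  have cs := real_inner_le_norm (a - b) (proj a - proj b)
  nlinarith [norm_nonneg (proj a - proj b), norm_nonneg (a - b)]

theorem two_mul_inner_le (hP : IsMetricProjection K proj) (hK : Convex ℝ K) (v G : H) (η : ℝ)
    {u : H} (hu : u ∈ K) :
    2 * η * ⟪G, v - u⟫ ≤ ‖v - u‖ ^ 2 - ‖proj (v - η • G) - u‖ ^ 2 + η ^ 2 * ‖G‖ ^ 2 := by
  have h := hP.norm_apply_sub_sq_le hK (v - η • G) hu
  rw [sub_right_comm, norm_sub_sq_real (v - u), real_inner_smul_right, real_inner_comm, norm_smul,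
    Real.norm_eq_abs, mul_pow, sq_abs] at h
  linarith

theorem inner_le_of_pos (hP : IsMetricProjection K proj) (hK : Convex ℝ K) (v G : H) {η : ℝ}
    (hη : 0 < η) {u : H} (hu : u ∈ K) :
    ⟪G, v - u⟫ ≤ η⁻¹ / 2 * (‖v - u‖ ^ 2 - ‖proj (v - η • G) - u‖ ^ 2) + η / 2 * ‖G‖ ^ 2 := by
  calc ⟪G, v - u⟫ = η⁻¹ / 2 * (2 * η * ⟪G, v - u⟫) := by field_simp
    _ ≤ η⁻¹ / 2 * (‖v - u‖ ^ 2 - ‖proj (v - η • G) - u‖ ^ 2 + η ^ 2 * ‖G‖ ^ 2) := by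
        gcongr; exact hP.two_mul_inner_le hK v G η hu
    _ = _ := by field_simp

end IsMetricProjection

/-- Equals `0` (junk value of `D / 0`) while all gradients so far vanish; the iteration then
stays put, as the projection fixes `K`. -/
noncomputable def adaptiveStepSize {H : Type*} [NormedAddCommGroup H] (D : ℝ) (G : ℕ → H)
    (t : ℕ) : ℝ :=
  D / (√2 * √(∑ τ ∈ Icc 1 t, ‖G τ‖ ^ 2))

section Adaptive

variable {H : Type*} [NormedAddCommGroup H] [InnerProductSpace ℝ H] {K : Set H} {proj : H → H}
  {D : ℝ}

theorem IsMetricProjection.adaptive_iterate (hP : IsMetricProjection K proj) (G v : ℕ → H)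
    (hv1 : v 1 ∈ K)
    (hpos : ∀ t, 1 ≤ t → 0 < √(∑ τ ∈ Icc 1 t, ‖G τ‖ ^ 2) →
      v (t + 1) = proj (v t - adaptiveStepSize D G t • G t))
    (hzero : ∀ t, 1 ≤ t → √(∑ τ ∈ Icc 1 t, ‖G τ‖ ^ 2) = 0 → v (t + 1) = v t) :
    ∀ t, 1 ≤ t → v t ∈ K ∧ v (t + 1) = proj (v t - adaptiveStepSize D G t • G t) := by
  have step : ∀ t, 1 ≤ t → v t ∈ K → v (t + 1) = proj (v t - adaptiveStepSize D G t • G t) := by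
    intro t ht hvt
    rcases (Real.sqrt_nonneg _).eq_or_lt with h | h
    · rw [hzero t ht h.symm, adaptiveStepSize, ← h, mul_zero, div_zero, zero_smul, sub_zero,
        hP.apply_of_mem hvt]
    · exact hpos t ht h
  have mem : ∀ t, 1 ≤ t → v t ∈ K := by
    intro t ht
    induction t, ht using Nat.le_induction with
    | base => exact hv1
    | succ t ht ih => rw [step t ht ih]; exact hP.mem _
  exact fun t ht => ⟨mem t ht, step t ht (mem t ht)⟩

theorem IsMetricProjection.inner_le_adaptive_step (hP : IsMetricProjection K proj)
    (hK : Convex ℝ K) (hD : ∀ w ∈ K, ∀ v ∈ K, ‖w - v‖ ≤ D) (G : ℕ → H) {t : ℕ} (ht : 1 ≤ t)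
    {v u : H} (hv : v ∈ K) (hu : u ∈ K) :
    ⟪G t, v - u⟫ ≤ (adaptiveStepSize D G t)⁻¹ / 2 *
        (‖v - u‖ ^ 2 - ‖proj (v - adaptiveStepSize D G t • G t) - u‖ ^ 2) +
      adaptiveStepSize D G t / 2 * ‖G t‖ ^ 2 := by
  have hD0 : 0 ≤ D := (norm_nonneg _).trans (hD u hu u hu)
  rcases (by unfold adaptiveStepSize; positivity : 0 ≤ adaptiveStepSize D G t).eq_or_lt
    with h0 | hpos
  · suffices ⟪G t, v - u⟫ = 0 by rw [← h0, this]; simp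
    rcases div_eq_zero_iff.1 h0.symm with hDz | hσ
    · have := hD v hv u hu
      rw [hDz, norm_le_zero_iff, sub_eq_zero] at this
      rw [this, sub_self, inner_zero_right]
    · have hS : ∑ τ ∈ Icc 1 t, ‖G τ‖ ^ 2 ≤ 0 := Real.sqrt_eq_zero'.1 (by simpa using hσ)
      have hGt : ‖G t‖ ^ 2 ≤ ∑ τ ∈ Icc 1 t, ‖G τ‖ ^ 2 :=
        single_le_sum (fun τ _ => sq_nonneg ‖G τ‖) (mem_Icc.2 ⟨ht, le_rfl⟩)
      have hG0 : ‖G t‖ = 0 := by nlinarith [norm_nonneg (G t)]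
      rw [norm_eq_zero.1 hG0, inner_zero_left]
  · exact hP.inner_le_of_pos hK v (G t) hpos hu

theorem IsMetricProjection.sum_inner_le_adaptive (hP : IsMetricProjection K proj)
    (hK : Convex ℝ K) (hD : ∀ w ∈ K, ∀ v ∈ K, ‖w - v‖ ≤ D) (G v : ℕ → H)
    (hv : ∀ t, 1 ≤ t → v t ∈ K ∧ v (t + 1) = proj (v t - adaptiveStepSize D G t • G t))
    {u : H} (hu : u ∈ K) (T : ℕ) :
    ∑ t ∈ Icc 1 T, ⟪G t, v t - u⟫ ≤ √2 * D * √(∑ t ∈ Icc 1 T, ‖G t‖ ^ 2) := by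
  set σ : ℕ → ℝ := fun t => √(∑ τ ∈ Icc 1 t, ‖G τ‖ ^ 2)
  set a : ℕ → ℝ := fun t => ‖v t - u‖ ^ 2
  have hD0 : 0 ≤ D := (norm_nonneg _).trans (hD u hu u hu)
  have hstep : ∀ t ∈ Icc 1 T, ⟪G t, v t - u⟫ ≤
      √2 * σ t / D / 2 * (a t - a (t + 1)) + D / (2 * √2) * (‖G t‖ ^ 2 / σ t) := by
    intro t ht
    obtain ⟨hvt, hvt1⟩ := hv t (mem_Icc.1 ht).1
    convert hP.inner_le_adaptive_step hK hD G (mem_Icc.1 ht).1 hvt hu using 2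
    · rw [← hvt1, adaptiveStepSize, inv_div]
    · rw [adaptiveStepSize]; ring
  have hσ_mono : Monotone σ := fun s t hst =>
    Real.sqrt_le_sqrt (sum_le_sum_of_subset_of_nonneg (Icc_subset_Icc_right hst)
      fun τ _ _ => sq_nonneg ‖G τ‖)
  have htel := sum_Icc_mul_sub_succ_le (c := fun t => √2 * σ t / D) (a := a) (B := D ^ 2)
    (fun s t hst => by dsimp only; gcongr; exact hσ_mono hst) (by positivity)
    (fun t ht => ⟨sq_nonneg _, pow_le_pow_left₀ (norm_nonneg _) (hD _ (hv t ht).1 u hu) 2⟩) T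
  have hsum := sum_div_sqrt_partialSum_le (fun t => ‖G t‖ ^ 2) (fun t => sq_nonneg _) T
  calc ∑ t ∈ Icc 1 T, ⟪G t, v t - u⟫
      ≤ ∑ t ∈ Icc 1 T, (√2 * σ t / D / 2 * (a t - a (t + 1)) +
          D / (2 * √2) * (‖G t‖ ^ 2 / σ t)) := sum_le_sum hstep
    _ = (∑ t ∈ Icc 1 T, √2 * σ t / D * (a t - a (t + 1))) / 2 +
          D / (2 * √2) * ∑ t ∈ Icc 1 T, ‖G t‖ ^ 2 / σ t := by
        rw [sum_add_distrib, mul_sum, sum_div]; congr 1; exact sum_congr rfl fun t _ => by ring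
    _ ≤ √2 * σ T / D * D ^ 2 / 2 + D / (2 * √2) * (2 * σ T) := by gcongr
    _ = √2 * D * σ T := by
        rcases hD0.eq_or_lt with hDz | hDpos
        · simp [← hDz]
        · field_simp; rw [Real.sq_sqrt zero_le_two]; ring

end Adaptive

section Stochastic

variable {Ω : Type*} {m mΩ : MeasurableSpace Ω} {μ : Measure Ω}
  {H : Type*} [NormedAddCommGroup H]

theorem lintegral_ofReal_mul_eq_condExp (hm : m ≤ mΩ) [IsFiniteMeasure μ] {X : Ω → ℝ}
    (hX : Integrable X μ) (hX0 : 0 ≤ᵐ[μ] X) {h : Ω → ℝ≥0∞} (hh : Measurable[m] h) :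
    ∫⁻ ω, ENNReal.ofReal (X ω) * h ω ∂μ = ∫⁻ ω, ENNReal.ofReal (μ[X|m] ω) * h ω ∂μ := by
  have htrim : (μ.withDensity fun ω => ENNReal.ofReal (X ω)).trim hm
      = (μ.withDensity fun ω => ENNReal.ofReal (μ[X|m] ω)).trim hm := by
    refine @Measure.ext _ m _ _ fun s hs => ?_
    rw [trim_measurableSet_eq hm hs, trim_measurableSet_eq hm hs,
      withDensity_apply _ (hm s hs), withDensity_apply _ (hm s hs),
      ← ofReal_integral_eq_lintegral_ofReal hX.integrableOn (ae_restrict_of_ae hX0),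
      ← ofReal_integral_eq_lintegral_ofReal integrable_condExp.integrableOn
        (ae_restrict_of_ae (condExp_nonneg hX0)), setIntegral_condExp hm hX hs]
  calc ∫⁻ ω, ENNReal.ofReal (X ω) * h ω ∂μ
      = ∫⁻ ω, h ω ∂(μ.withDensity fun ω => ENNReal.ofReal (X ω)).trim hm := by
        rw [lintegral_trim hm hh, lintegral_withDensity_eq_lintegral_mul₀
          hX.1.aemeasurable.ennreal_ofReal (hh.mono hm le_rfl).aemeasurable]
        rfl
    _ = ∫⁻ ω, ENNReal.ofReal (μ[X|m] ω) * h ω ∂μ := by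
        rw [htrim, lintegral_trim hm hh, lintegral_withDensity_eq_lintegral_mul _
          (stronglyMeasurable_condExp.mono hm).measurable.ennreal_ofReal (hh.mono hm le_rfl)]
        rfl

theorem integrable_mul_of_condExp_eq (hm : m ≤ mΩ) [IsFiniteMeasure μ] {X q h : Ω → ℝ}
    (hX : Integrable X μ) (hX0 : 0 ≤ᵐ[μ] X) (hq : μ[X|m] =ᵐ[μ] q) (hh : StronglyMeasurable[m] h)
    (hqh : Integrable (fun ω => q ω * h ω) μ) :
    Integrable (fun ω => X ω * h ω) μ ∧ ∫ ω, X ω * h ω ∂μ = ∫ ω, q ω * h ω ∂μ := by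
  have hq0 : 0 ≤ᵐ[μ] q := (condExp_nonneg hX0).trans_eq hq
  have hXh : Integrable (fun ω => X ω * h ω) μ := by
    refine ⟨hX.1.mul (hh.mono hm).aestronglyMeasurable, ?_⟩
    calc ∫⁻ ω, ‖X ω * h ω‖ₑ ∂μ = ∫⁻ ω, ENNReal.ofReal (X ω) * ‖h ω‖ₑ ∂μ := by
          refine lintegral_congr_ae ?_
          filter_upwards [hX0] with ω hω
          rw [enorm_mul, Real.enorm_eq_ofReal hω]
      _ = ∫⁻ ω, ‖q ω * h ω‖ₑ ∂μ := by
          rw [lintegral_ofReal_mul_eq_condExp hm hX hX0 hh.enorm]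
          refine lintegral_congr_ae ?_
          filter_upwards [hq, hq0] with ω hω hω0
          rw [enorm_mul, Real.enorm_eq_ofReal hω0, hω]
      _ < ⊤ := hqh.2
  refine ⟨hXh, ?_⟩
  have hpull := condExp_mul_of_stronglyMeasurable_left (m := m) hh
    (hXh.congr (.of_forall fun ω => mul_comm _ _)) hX
  calc ∫ ω, X ω * h ω ∂μ = ∫ ω, (μ[h * X|m]) ω ∂μ := by
        rw [integral_condExp hm]; simp_rw [Pi.mul_apply, mul_comm]
    _ = ∫ ω, q ω * h ω ∂μ := by
        refine integral_congr_ae ?_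
        filter_upwards [hpull, hq] with ω h1 h2
        rw [h1, Pi.mul_apply, h2, mul_comm]

theorem integrable_of_integrable_norm_sq_div [IsFiniteMeasure μ] {p : Ω → ℝ} {g : Ω → H}
    (hg : AEStronglyMeasurable g μ) (hp : ∀ ω, 0 < p ω ∧ p ω ≤ 1)
    (hgp : Integrable (fun ω => ‖g ω‖ ^ 2 / p ω) μ) : Integrable g μ := by
  refine ((memLp_two_iff_integrable_sq_norm hg).2 (hgp.mono' (hg.norm.pow 2) ?_)).integrable
    one_le_two
  filter_upwards with ω
  rw [Real.norm_of_nonneg (sq_nonneg _)]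
  exact le_div_self (sq_nonneg _) (hp ω).1 (hp ω).2

theorem integrable_of_integrable_sum_of_nonneg {ι : Type*} {s : Finset ι} {f : ι → Ω → ℝ}
    (hf : ∀ i ∈ s, AEStronglyMeasurable (f i) μ) (hf0 : ∀ i ∈ s, ∀ ω, 0 ≤ f i ω)
    (hsum : Integrable (fun ω => ∑ i ∈ s, f i ω) μ) {i : ι} (hi : i ∈ s) : Integrable (f i) μ :=
  hsum.mono' (hf i hi) (.of_forall fun ω => by
    rw [Real.norm_of_nonneg (hf0 i hi ω)]; exact single_le_sum (fun j hj => hf0 j hj ω) hi)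

theorem integrable_sqrt [IsFiniteMeasure μ] {f : Ω → ℝ} (hf : Integrable f μ)
    (hf0 : ∀ ω, 0 ≤ f ω) : Integrable (fun ω => √(f ω)) μ := by
  have hsm : AEStronglyMeasurable (fun ω => √(f ω)) μ := hf.1.aemeasurable.sqrt.aestronglyMeasurable
  refine ((memLp_two_iff_integrable_sq_norm hsm).2 ?_).integrable one_le_two
  simpa only [Real.norm_of_nonneg (Real.sqrt_nonneg _), Real.sq_sqrt (hf0 _)] using hf

theorem integral_sqrt_le_sqrt_integral [IsProbabilityMeasure μ] {f : Ω → ℝ}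
    (hf : Integrable f μ) (hf0 : ∀ ω, 0 ≤ f ω) : ∫ ω, √(f ω) ∂μ ≤ √(∫ ω, f ω ∂μ) :=
  Real.strictConcaveOn_sqrt.concaveOn.le_map_integral Real.continuous_sqrt.continuousOn
    isClosed_Ici (.of_forall hf0) hf (integrable_sqrt hf hf0)

structure IsCondBernoulli (m : MeasurableSpace Ω) (μ : Measure[mΩ] Ω) (X p : Ω → ℝ) : Prop where
  measurable : Measurable[mΩ] X
  eq_zero_or_eq_one : ∀ ω, X ω = 0 ∨ X ω = 1
  measurable_prob : Measurable[m] p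
  prob_pos : ∀ ω, 0 < p ω
  prob_le_one : ∀ ω, p ω ≤ 1
  condExp_eq : μ[X|m] =ᵐ[μ] p

namespace IsCondBernoulli

variable {X p : Ω → ℝ}

theorem nonneg (hB : IsCondBernoulli m μ X p) (ω : Ω) : 0 ≤ X ω := by
  rcases hB.eq_zero_or_eq_one ω with h | h <;> simp [h]

theorem integrable [IsFiniteMeasure μ] (hB : IsCondBernoulli m μ X p) : Integrable X μ :=
  .of_bound hB.measurable.aestronglyMeasurable 1
    (.of_forall fun ω => by rcases hB.eq_zero_or_eq_one ω with h | h <;> simp [h])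

variable [InnerProductSpace ℝ H]

theorem integral_inner_eq [IsFiniteMeasure μ] (hB : IsCondBernoulli m μ X p) (hm : m ≤ mΩ)
    {g ĝ y : Ω → H} (hĝ : ∀ ω, ĝ ω = (X ω / p ω) • g ω) (hg : StronglyMeasurable[m] g)
    (hy : StronglyMeasurable[m] y) (hgy : Integrable (fun ω => ⟪g ω, y ω⟫) μ) :
    Integrable (fun ω => ⟪ĝ ω, y ω⟫) μ ∧ ∫ ω, ⟪ĝ ω, y ω⟫ ∂μ = ∫ ω, ⟪g ω, y ω⟫ ∂μ := by
  simp only [hĝ]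
  have hX_eq : ∀ ω, ⟪(X ω / p ω) • g ω, y ω⟫ = X ω * (⟪g ω, y ω⟫ / p ω) := fun ω => by
    rw [real_inner_smul_left]; ring
  have hp_eq : ∀ ω, p ω * (⟪g ω, y ω⟫ / p ω) = ⟪g ω, y ω⟫ := fun ω =>
    mul_div_cancel₀ _ (hB.prob_pos ω).ne'
  obtain ⟨hint, heq⟩ := integrable_mul_of_condExp_eq (h := fun ω => ⟪g ω, y ω⟫ / p ω) hm
    hB.integrable (.of_forall hB.nonneg) hB.condExp_eq
    ((hg.inner hy).measurable.div hB.measurable_prob).stronglyMeasurable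
    (by simpa only [hp_eq] using hgy)
  simp only [hp_eq] at heq
  simpa only [hX_eq] using And.intro hint heq

theorem integral_norm_sq_eq [IsFiniteMeasure μ] (hB : IsCondBernoulli m μ X p) (hm : m ≤ mΩ)
    {g ĝ : Ω → H} (hĝ : ∀ ω, ĝ ω = (X ω / p ω) • g ω) (hg : StronglyMeasurable[m] g)
    (hgp : Integrable (fun ω => ‖g ω‖ ^ 2 / p ω) μ) :
    Integrable (fun ω => ‖ĝ ω‖ ^ 2) μ ∧ ∫ ω, ‖ĝ ω‖ ^ 2 ∂μ = ∫ ω, ‖g ω‖ ^ 2 / p ω ∂μ := by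
  simp only [hĝ]
  have hX_eq : ∀ ω, ‖(X ω / p ω) • g ω‖ ^ 2 = X ω * (‖g ω‖ ^ 2 / p ω ^ 2) := fun ω => by
    rw [norm_smul, Real.norm_eq_abs, mul_pow, sq_abs, div_pow]
    rcases hB.eq_zero_or_eq_one ω with h | h <;> rw [h] <;> ring
  have hp_eq : ∀ ω, p ω * (‖g ω‖ ^ 2 / p ω ^ 2) = ‖g ω‖ ^ 2 / p ω := fun ω => by
    field_simp [(hB.prob_pos ω).ne']
  obtain ⟨hint, heq⟩ := integrable_mul_of_condExp_eq (h := fun ω => ‖g ω‖ ^ 2 / p ω ^ 2) hm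
    hB.integrable (.of_forall hB.nonneg) hB.condExp_eq
    ((hg.norm.measurable.pow_const 2).div (hB.measurable_prob.pow_const 2)).stronglyMeasurable
    (by simpa only [hp_eq] using hgp)
  simp only [hp_eq] at heq
  simpa only [hX_eq] using And.intro hint heq

end IsCondBernoulli

theorem integrable_norm_sq_div_of_integrable_sum {𝓕 : Filtration ℕ mΩ} {T : ℕ}
    {X p : ℕ → Ω → ℝ} {g : ℕ → Ω → H}
    (hB : ∀ t ∈ Icc 1 T, IsCondBernoulli (𝓕 (t - 1)) μ (X t) (p t))
    (hg : ∀ t ∈ Icc 1 T, StronglyMeasurable[𝓕 (t - 1)] (g t))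
    (hg_int : Integrable (fun ω => ∑ t ∈ Icc 1 T, ‖g t ω‖ ^ 2 / p t ω) μ) :
    ∀ t ∈ Icc 1 T, Integrable (fun ω => ‖g t ω‖ ^ 2 / p t ω) μ :=
  fun _ ht => integrable_of_integrable_sum_of_nonneg (fun t ht =>
    (((hg t ht).mono (𝓕.le _)).norm.measurable.pow_const 2 |>.div
      ((hB t ht).measurable_prob.mono (𝓕.le _) le_rfl)).aestronglyMeasurable)
    (fun t ht ω => div_nonneg (sq_nonneg _) ((hB t ht).prob_pos ω).le) hg_int ht

variable [InnerProductSpace ℝ H]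

theorem integrable_inner_of_norm_le {g y : Ω → H} (hg : Integrable g μ)
    (hy : AEStronglyMeasurable y μ) {C : ℝ} (hyC : ∀ ω, ‖y ω‖ ≤ C) :
    Integrable (fun ω => ⟪g ω, y ω⟫) μ := by
  refine (hg.norm.mul_const C).mono' (hg.1.inner hy) (.of_forall fun ω => ?_)
  exact (norm_inner_le_norm _ _).trans (mul_le_mul_of_nonneg_left (hyC ω) (norm_nonneg _))

section Horizon

variable {𝓕 : Filtration ℕ mΩ} {T : ℕ} {X p : ℕ → Ω → ℝ} {g ĝ : ℕ → Ω → H} [IsFiniteMeasure μ]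

theorem integral_sum_inner_eq_of_isCondBernoulli
    (hB : ∀ t ∈ Icc 1 T, IsCondBernoulli (𝓕 (t - 1)) μ (X t) (p t))
    (hĝ : ∀ t ω, ĝ t ω = (X t ω / p t ω) • g t ω)
    (hg : ∀ t ∈ Icc 1 T, StronglyMeasurable[𝓕 (t - 1)] (g t))
    (hgp : ∀ t ∈ Icc 1 T, Integrable (fun ω => ‖g t ω‖ ^ 2 / p t ω) μ) {y : ℕ → Ω → H}
    (hy : ∀ t ∈ Icc 1 T, StronglyMeasurable[𝓕 (t - 1)] (y t)) {C : ℝ}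
    (hyC : ∀ t ∈ Icc 1 T, ∀ ω, ‖y t ω‖ ≤ C) :
    Integrable (fun ω => ∑ t ∈ Icc 1 T, ⟪ĝ t ω, y t ω⟫) μ ∧
      ∫ ω, ∑ t ∈ Icc 1 T, ⟪g t ω, y t ω⟫ ∂μ = ∫ ω, ∑ t ∈ Icc 1 T, ⟪ĝ t ω, y t ω⟫ ∂μ := by
  have hgy : ∀ t ∈ Icc 1 T, Integrable (fun ω => ⟪g t ω, y t ω⟫) μ := fun t ht =>
    integrable_inner_of_norm_le (integrable_of_integrable_norm_sq_div
      ((hg t ht).mono (𝓕.le _)).aestronglyMeasurable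
      (fun ω => ⟨(hB t ht).prob_pos ω, (hB t ht).prob_le_one ω⟩) (hgp t ht))
      ((hy t ht).mono (𝓕.le _)).aestronglyMeasurable (hyC t ht)
  have h := fun t ht => (hB t ht).integral_inner_eq (𝓕.le _) (hĝ t) (hg t ht) (hy t ht) (hgy t ht)
  refine ⟨integrable_finsetSum _ fun t ht => (h t ht).1, ?_⟩
  rw [integral_finsetSum _ hgy, integral_finsetSum _ fun t ht => (h t ht).1]
  exact sum_congr rfl fun t ht => (h t ht).2.symm

theorem integral_sum_norm_sq_eq_of_isCondBernoulli
    (hB : ∀ t ∈ Icc 1 T, IsCondBernoulli (𝓕 (t - 1)) μ (X t) (p t))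
    (hĝ : ∀ t ω, ĝ t ω = (X t ω / p t ω) • g t ω)
    (hg : ∀ t ∈ Icc 1 T, StronglyMeasurable[𝓕 (t - 1)] (g t))
    (hgp : ∀ t ∈ Icc 1 T, Integrable (fun ω => ‖g t ω‖ ^ 2 / p t ω) μ) :
    Integrable (fun ω => ∑ t ∈ Icc 1 T, ‖ĝ t ω‖ ^ 2) μ ∧
      ∫ ω, ∑ t ∈ Icc 1 T, ‖ĝ t ω‖ ^ 2 ∂μ = ∫ ω, ∑ t ∈ Icc 1 T, ‖g t ω‖ ^ 2 / p t ω ∂μ := by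
  have h := fun t ht => (hB t ht).integral_norm_sq_eq (𝓕.le _) (hĝ t) (hg t ht) (hgp t ht)
  refine ⟨integrable_finsetSum _ fun t ht => (h t ht).1, ?_⟩
  rw [integral_finsetSum _ fun t ht => (h t ht).1, integral_finsetSum _ hgp]
  exact sum_congr rfl fun t ht => (h t ht).2

end Horizon

theorem stronglyMeasurable_adaptive_iterate (𝓕 : Filtration ℕ mΩ) {proj : H → H}
    (hproj : Continuous proj) {D : ℝ} (G w : ℕ → Ω → H) (T : ℕ)
    (hG : ∀ t ∈ Icc 1 T, StronglyMeasurable[𝓕 t] (G t)) (hw1 : StronglyMeasurable[𝓕 0] (w 1))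
    (hw : ∀ t, 1 ≤ t → ∀ ω,
      w (t + 1) ω = proj (w t ω - adaptiveStepSize D (fun τ => G τ ω) t • G t ω)) :
    ∀ t ∈ Icc 1 T, StronglyMeasurable[𝓕 (t - 1)] (w t) := by
  intro t ht
  obtain ⟨ht1, htT⟩ := mem_Icc.1 ht
  clear ht
  induction t, ht1 using Nat.le_induction with
  | base => exact hw1
  | succ t ht ih =>
    have hGt : ∀ τ ∈ Icc 1 t, StronglyMeasurable[𝓕 t] (G τ) := fun τ hτ =>
      (hG τ (Icc_subset_Icc_right (by omega) hτ)).mono (𝓕.mono (mem_Icc.1 hτ).2)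
    have hη : StronglyMeasurable[𝓕 t] fun ω => adaptiveStepSize D (fun τ => G τ ω) t :=
      (measurable_const.div (measurable_const.mul (Finset.measurable_sum _ fun τ hτ =>
        (hGt τ hτ).norm.measurable.pow_const 2).sqrt)).stronglyMeasurable
    rw [Nat.add_sub_cancel, funext (hw t ht)]
    exact hproj.comp_stronglyMeasurable
      (((ih (by omega)).mono (𝓕.mono (t.sub_le 1))).sub
        (hη.smul (hGt t (mem_Icc.2 ⟨ht, le_rfl⟩))))

end Stochastic

theorem stmt9_general
    {Ω : Type*} {mΩ : MeasurableSpace Ω} {μ : Measure Ω} [IsProbabilityMeasure μ]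
    (𝓕 : Filtration ℕ mΩ)
    {H : Type*} [NormedAddCommGroup H] [InnerProductSpace ℝ H]
    (K : Set H) (hKconvex : Convex ℝ K)
    (D : ℝ) (hD : ∀ w ∈ K, ∀ v ∈ K, ‖w - v‖ ≤ D)
    (proj : H → H)
    (hproj_mem : ∀ v, proj v ∈ K)
    (hproj_min : ∀ v, ∀ u ∈ K, ‖v - proj v‖ ≤ ‖v - u‖)
    (T : ℕ) (g : ℕ → Ω → H) (p X : ℕ → Ω → ℝ) (gtld : ℕ → Ω → H)
    (hp_meas : ∀ t ∈ Icc 1 T, Measurable[𝓕 (t - 1)] (p t))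
    (hp_range : ∀ t ∈ Icc 1 T, ∀ ω, 0 < p t ω ∧ p t ω ≤ 1)
    (hg_meas : ∀ t ∈ Icc 1 T, StronglyMeasurable[𝓕 (t - 1)] (g t))
    (hg_int : Integrable (fun ω => ∑ t ∈ Icc 1 T, ‖g t ω‖ ^ 2 / p t ω) μ)
    (hX_meas : ∀ t ∈ Icc 1 T, Measurable[𝓕 t] (X t))
    (hX01 : ∀ t ∈ Icc 1 T, ∀ ω, X t ω = 0 ∨ X t ω = 1)
    (hXcond : ∀ t ∈ Icc 1 T, μ[X t | 𝓕 (t - 1)] =ᵐ[μ] p t)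
    (hgtld : ∀ t ω, gtld t ω = (X t ω / p t ω) • g t ω)
    (w : ℕ → Ω → H) (w₁ : H) (hw₁K : w₁ ∈ K) (hw1 : ∀ ω, w 1 ω = w₁)
    (hiter_pos : ∀ t, 1 ≤ t → ∀ ω,
      0 < Real.sqrt (∑ τ ∈ Icc 1 t, ‖gtld τ ω‖ ^ 2) →
      w (t + 1) ω = proj (w t ω -
        (D / (Real.sqrt 2 * Real.sqrt (∑ τ ∈ Icc 1 t, ‖gtld τ ω‖ ^ 2))) • gtld t ω))
    (hiter_zero : ∀ t, 1 ≤ t → ∀ ω,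
      Real.sqrt (∑ τ ∈ Icc 1 t, ‖gtld τ ω‖ ^ 2) = 0 → w (t + 1) ω = w t ω)
    (wstar : H) (hwstar : wstar ∈ K) :
    (∫ ω, (∑ t ∈ Icc 1 T, ⟪g t ω, w t ω - wstar⟫) ∂μ) ≤
        Real.sqrt 2 * D * ∫ ω, Real.sqrt (∑ t ∈ Icc 1 T, ‖gtld t ω‖ ^ 2) ∂μ ∧
      Real.sqrt 2 * D * (∫ ω, Real.sqrt (∑ t ∈ Icc 1 T, ‖gtld t ω‖ ^ 2) ∂μ) ≤
        Real.sqrt 2 * D *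
          Real.sqrt (∫ ω, (∑ t ∈ Icc 1 T, ‖g t ω‖ ^ 2 / p t ω) ∂μ) := by
  have hP : IsMetricProjection K proj := ⟨hproj_mem, hproj_min⟩
  have hiter : ∀ ω, ∀ t, 1 ≤ t → w t ω ∈ K ∧
      w (t + 1) ω = proj (w t ω - adaptiveStepSize D (fun τ => gtld τ ω) t • gtld t ω) :=
    fun ω => hP.adaptive_iterate _ (fun t => w t ω) (hw1 ω ▸ hw₁K)
      (fun t ht => hiter_pos t ht ω) (fun t ht => hiter_zero t ht ω)
  have hB : ∀ t ∈ Icc 1 T, IsCondBernoulli (𝓕 (t - 1)) μ (X t) (p t) := fun t ht =>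
    ⟨(hX_meas t ht).mono (𝓕.le t) le_rfl, hX01 t ht, hp_meas t ht,
      fun ω => (hp_range t ht ω).1, fun ω => (hp_range t ht ω).2, hXcond t ht⟩
  have hgtld_meas : ∀ t ∈ Icc 1 T, StronglyMeasurable[𝓕 t] (gtld t) := fun t ht =>
    funext (hgtld t) ▸ ((hX_meas t ht).div ((hp_meas t ht).mono (𝓕.mono (t.sub_le 1)) le_rfl)
      ).stronglyMeasurable.smul ((hg_meas t ht).mono (𝓕.mono (t.sub_le 1)))
  have hw_meas := stronglyMeasurable_adaptive_iterate 𝓕 (hP.lipschitzWith_one hKconvex).continuous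
    gtld w T hgtld_meas (by rw [funext hw1]; exact stronglyMeasurable_const)
    fun t ht ω => (hiter ω t ht).2
  have hgp := integrable_norm_sq_div_of_integrable_sum hB hg_meas hg_int
  obtain ⟨hregret_int, hregret_eq⟩ := integral_sum_inner_eq_of_isCondBernoulli hB hgtld hg_meas
    hgp (y := fun t ω => w t ω - wstar) (fun t ht => (hw_meas t ht).sub stronglyMeasurable_const)
    fun t ht ω => hD _ (hiter ω t (mem_Icc.1 ht).1).1 _ hwstar
  obtain ⟨hS_int, hS_eq⟩ := integral_sum_norm_sq_eq_of_isCondBernoulli hB hgtld hg_meas hgp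
  have hS0 : ∀ ω, 0 ≤ ∑ t ∈ Icc 1 T, ‖gtld t ω‖ ^ 2 := fun ω => sum_nonneg fun t _ => sq_nonneg _
  constructor
  · calc ∫ ω, ∑ t ∈ Icc 1 T, ⟪g t ω, w t ω - wstar⟫ ∂μ
        = ∫ ω, ∑ t ∈ Icc 1 T, ⟪gtld t ω, w t ω - wstar⟫ ∂μ := hregret_eq
      _ ≤ ∫ ω, √2 * D * √(∑ t ∈ Icc 1 T, ‖gtld t ω‖ ^ 2) ∂μ :=
          integral_mono hregret_int ((integrable_sqrt hS_int hS0).const_mul _)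
            fun ω => hP.sum_inner_le_adaptive hKconvex hD _ _ (hiter ω) hwstar T
      _ = _ := integral_const_mul _ _
  · have hD0 : 0 ≤ D := (norm_nonneg _).trans (hD wstar hwstar wstar hwstar)
    gcongr
    rw [← hS_eq]
    exact integral_sqrt_le_sqrt_integral hS_int hS0

/-- expected-regret guarantee for adaptive projected descent under
stochastic sub-gradient observation failures with known conditional observation
probabilities `p_t` (here `𝔼[X_t | 𝓕_{t-1}] = p_t` encodes
`ℙ(X_t = 1 | 𝓕_{t-1}) = p_t` for the `{0,1}`-valued `X_t`). -/
theorem stmt9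
    {Ω : Type*} {mΩ : MeasurableSpace Ω} {μ : Measure Ω} [IsProbabilityMeasure μ]
    (𝓕 : Filtration ℕ mΩ)
    {H : Type*} [NormedAddCommGroup H] [InnerProductSpace ℝ H] [CompleteSpace H]
    (K : Set H) (hKne : K.Nonempty) (hKclosed : IsClosed K) (hKconvex : Convex ℝ K)
    (D : ℝ) (hD : ∀ w ∈ K, ∀ v ∈ K, ‖w - v‖ ≤ D)
    (proj : H → H)
    (hproj_mem : ∀ v, proj v ∈ K)
    (hproj_min : ∀ v, ∀ u ∈ K, ‖v - proj v‖ ≤ ‖v - u‖)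
    (T : ℕ) (g : ℕ → Ω → H) (p X : ℕ → Ω → ℝ) (gtld : ℕ → Ω → H)
    (hp_meas : ∀ t ∈ Icc 1 T, Measurable[𝓕 (t - 1)] (p t))
    (hp_range : ∀ t ∈ Icc 1 T, ∀ ω, 0 < p t ω ∧ p t ω ≤ 1)
    (hg_meas : ∀ t ∈ Icc 1 T, StronglyMeasurable[𝓕 (t - 1)] (g t))
    (hg_int : Integrable (fun ω => ∑ t ∈ Icc 1 T, ‖g t ω‖ ^ 2 / p t ω) μ)
    (hX_meas : ∀ t ∈ Icc 1 T, Measurable[𝓕 t] (X t))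
    (hX01 : ∀ t ∈ Icc 1 T, ∀ ω, X t ω = 0 ∨ X t ω = 1)
    (hXcond : ∀ t ∈ Icc 1 T, μ[X t | 𝓕 (t - 1)] =ᵐ[μ] p t)
    (hgtld : ∀ t ω, gtld t ω = (X t ω / p t ω) • g t ω)
    (w : ℕ → Ω → H) (w₁ : H) (hw₁K : w₁ ∈ K) (hw1 : ∀ ω, w 1 ω = w₁)
    (hiter_pos : ∀ t, 1 ≤ t → ∀ ω,
      0 < Real.sqrt (∑ τ ∈ Icc 1 t, ‖gtld τ ω‖ ^ 2) →
      w (t + 1) ω = proj (w t ω -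
        (D / (Real.sqrt 2 * Real.sqrt (∑ τ ∈ Icc 1 t, ‖gtld τ ω‖ ^ 2))) • gtld t ω))
    (hiter_zero : ∀ t, 1 ≤ t → ∀ ω,
      Real.sqrt (∑ τ ∈ Icc 1 t, ‖gtld τ ω‖ ^ 2) = 0 → w (t + 1) ω = w t ω)
    (wstar : H) (hwstar : wstar ∈ K) :
    (∫ ω, (∑ t ∈ Icc 1 T, ⟪g t ω, w t ω - wstar⟫) ∂μ) ≤
        Real.sqrt 2 * D * ∫ ω, Real.sqrt (∑ t ∈ Icc 1 T, ‖gtld t ω‖ ^ 2) ∂μ ∧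
      Real.sqrt 2 * D * (∫ ω, Real.sqrt (∑ t ∈ Icc 1 T, ‖gtld t ω‖ ^ 2) ∂μ) ≤
        Real.sqrt 2 * D *
          Real.sqrt (∫ ω, (∑ t ∈ Icc 1 T, ‖g t ω‖ ^ 2 / p t ω) ∂μ) :=
  stmt9_general 𝓕 K hKconvex D hD proj hproj_mem hproj_min T g p X gtld hp_meas hp_range hg_meas
    hg_int hX_meas hX01 hXcond hgtld w w₁ hw₁K hw1 hiter_pos hiter_zero wstar hwstar
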